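/- arXiv:1810.07614 — 2 statements merged into one kernel-verified Lean document; each statement's English description precedes it below -/
import Mathlib

section
/- Let 1 ≤ p < ∞ and assume in addition that diam(X) = ∞. Let E ⊂ X be a Borel set, let x ∈ X and ε > 0. Then there exists an open set U ⊂ X such that E∖{x} ⊂ U (so 1_E ≤ 1_U on X∖{x}) and M_{p,r}(1_U − 1_E)(x) < ε for every r > 0. -/
open MeasureTheory Metric Set

section Defs

variable (X : Type*) [MetricSpace X]

/-- A curve, parametrized by arc length on `[0, len]`. -/
structure Curve where
  len : ℝ
  len_pos : 0 < len
  toFun : ℝ → X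
  lip : LipschitzOnWith 1 toFun (Icc 0 len)

variable {X}

/-- The curve integral `∫_γ g ds` (with respect to arc length). -/
noncomputable def Curve.integral (γ : Curve X) (g : X → ℝ) : ℝ :=
  ∫ t in Icc (0:ℝ) γ.len, g (γ.toFun t)

/-- `γ` connects the point `x` to the point `y`. -/
def Curve.Connects (γ : Curve X) (x y : X) : Prop :=
  γ.toFun 0 = x ∧ γ.toFun γ.len = y

/-- `γ` connects the point `x` to the set `E`. -/
def Curve.ConnectsSet (γ : Curve X) (x : X) (E : Set X) : Prop :=
  γ.toFun 0 = x ∧ γ.toFun γ.len ∈ E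

/-- `g` is an upper gradient of `u`: `|u(x) - u(y)| ≤ ∫_γ g ds` for every curve
connecting `x` to `y`. -/
def IsUpperGradient (g u : X → ℝ) : Prop :=
  ∀ γ : Curve X, |u (γ.toFun 0) - u (γ.toFun γ.len)| ≤ γ.integral g

/-- `X` is `C`-quasiconvex: any two distinct points are connected by a curve of
length at most `C` times their distance. -/
def IsQuasiconvex (X : Type*) [MetricSpace X] (C : ℝ) : Prop :=
  ∀ x y : X, x ≠ y → ∃ γ : Curve X, γ.Connects x y ∧ γ.len ≤ C * dist x y

variable [MeasurableSpace X]

/-- The `r`-restricted maximal function `M_{p,r} f(x)`. -/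
noncomputable def restrMax (μ : Measure X) (p r : ℝ) (f : X → ℝ) (x : X) : ℝ :=
  if r = 0 then |f x|
  else sSup { m | ∃ y t, x ∈ ball y t ∧ 0 < t ∧ t < r ∧
    m = (⨍ z in ball y t, |f z| ^ p ∂μ) ^ (1/p) }

/-- `μ` is doubling with constant `D`. -/
def IsDoubling (μ : Measure X) (D : ℝ) : Prop :=
  ∀ (x : X) (r : ℝ), 0 < r → μ (ball x (2*r)) ≤ ENNReal.ofReal D * μ (ball x r)

/-- All balls have positive finite measure. -/
def BallsPosFinite (μ : Measure X) : Prop :=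
  ∀ (x : X) (r : ℝ), 0 < r → 0 < μ (ball x r) ∧ μ (ball x r) < ⊤

/-- The pointwise `p`-Hardy inequality for the open set `Ω`, with constants `C_H`, `κ`. -/
def PointwiseHardy (μ : Measure X) (p : ℝ) (Ω : Set X) (C_H κ : ℝ) : Prop :=
  ∀ u g : X → ℝ, (∃ L, LipschitzWith L u) → (∀ y ∉ Ω, u y = 0) →
    Measurable g → (∀ y, 0 ≤ g y) → (∃ M, ∀ y, g y ≤ M) → IsUpperGradient g u →
    ∀ x ∈ Ω, |u x| ≤ C_H * infDist x Ωᶜ * restrMax μ p (κ * infDist x Ωᶜ) g x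

/-- The `p`-Poincaré inequality on `X` with constants `C`, `lam`. -/
def Poincare (μ : Measure X) (p C lam : ℝ) : Prop :=
  ∀ (x₀ : X) (r : ℝ), 0 < r → ∀ u g : X → ℝ,
    (∃ L, LipschitzWith L u) → Measurable g → (∀ y, 0 ≤ g y) → (∃ M, ∀ y, g y ≤ M) →
    IsUpperGradient g u →
    ⨍ y in ball x₀ r, |u y - ⨍ z in ball x₀ r, u z ∂μ| ∂μ ≤
      C * r * (⨍ y in ball x₀ (lam * r), (g y) ^ p ∂μ) ^ (1/p)

/-- `inf_{γ ∈ Γ(X)^ν_{x,E}} ∫_γ g ds` : infimum of curve integrals over curves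
connecting `x` to `E` of length at most `ν d(x,E)`. -/
noncomputable def curveInfSet (g : X → ℝ) (x : X) (E : Set X) (ν : ℝ) : ℝ :=
  sInf { I | ∃ γ : Curve X, γ.ConnectsSet x E ∧ γ.len ≤ ν * infDist x E ∧ I = γ.integral g }

/-- `inf_{γ ∈ Γ(X)^ν_{x,y}} ∫_γ g ds` : infimum of curve integrals over curves
connecting `x` to `y` of length at most `ν d(x,y)`. -/
noncomputable def curveInfPt (g : X → ℝ) (x y : X) (ν : ℝ) : ℝ :=
  sInf { I | ∃ γ : Curve X, γ.Connects x y ∧ γ.len ≤ ν * dist x y ∧ I = γ.integral g }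

/-- The function `α_{p,Ω}(ν,κ,τ)`. -/
noncomputable def alphaFn (μ : Measure X) (p : ℝ) (Ω : Set X) (ν κ τ : ℝ) : ℝ :=
  sSup { v | ∃ x ∈ Ω, ∃ g : X → ℝ, LowerSemicontinuous g ∧ (∀ y, g y ∈ Icc (0:ℝ) 1) ∧
    restrMax μ p (κ * infDist x Ωᶜ) g x ≤ τ ∧
    v = curveInfSet g x Ωᶜ ν / infDist x Ωᶜ }

end Defs

open scoped ENNReal symmDiff

/-!
Decompose `E \ {x}` into the dyadic annuli `2^k ≤ d(·, x) < 2^(k+1)`, `k ∈ ℤ`, and approximate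
each piece from outside by an open set whose excess measure is a summable fraction of
`μ (B(x, 2^(k+1)))`, after cutting it off inside `B̄(x, 2^(k-1))`. A ball `B(y, t) ∋ x` then only
meets the pieces with `2^(k+1) < 8t`, so the total excess inside it is a small multiple of
`μ (B(x, 8t))`, hence, by doubling, of `μ (B(y, t))`. The point `x` itself matters only when it
is an atom lying in `E`; then a small ball around `x` is added, whose excess is small compared
with `μ {x} ≤ μ (B(y, t))`. Finally `|1_U - 1_E| ^ p = 1_(U ∆ E)`, so every `p`-average in the
maximal function is at most `(μ ((U ∆ E) ∩ B) / μ B) ^ (1/p)`.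
-/

section

variable {α : Type*}

lemma abs_indicator_one_sub_indicator_one_rpow {p : ℝ} (hp : p ≠ 0) (U E : Set α) (z : α) :
    |U.indicator (fun _ => (1 : ℝ)) z - E.indicator (fun _ => 1) z| ^ p =
      (U ∆ E).indicator (fun _ => 1) z := by
  by_cases hU : z ∈ U <;> by_cases hE : z ∈ E <;> simp [hU, hE, mem_symmDiff, hp]

variable [MeasurableSpace α] {μ : Measure α}

lemma setAverage_indicator_one {S : Set α} (hS : MeasurableSet S) (B : Set α) :
    ⨍ z in B, S.indicator (fun _ => (1 : ℝ)) z ∂μ = μ.real (S ∩ B) / μ.real B := by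
  rw [setAverage_eq, setIntegral_indicator hS, setIntegral_const, smul_eq_mul, smul_eq_mul,
    mul_one, ← div_eq_inv_mul, inter_comm]

lemma measureReal_div_le_of_le_ofReal_mul {s t : Set α} {η : ℝ} (hη : 0 ≤ η) (ht : μ t ≠ ∞)
    (h : μ s ≤ ENNReal.ofReal η * μ t) : μ.real s / μ.real t ≤ η := by
  refine div_le_of_le_mul₀ measureReal_nonneg hη ?_
  simpa [Measure.real, ENNReal.toReal_mul, hη] using
    ENNReal.toReal_mono (ENNReal.mul_ne_top ENNReal.ofReal_ne_top ht) h

end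

section

variable {X : Type*} [MetricSpace X] [MeasurableSpace X] {μ : Measure X}

lemma BallsPosFinite.isLocallyFiniteMeasure (hball : BallsPosFinite μ) :
    IsLocallyFiniteMeasure μ :=
  ⟨fun z => ⟨ball z 1, ball_mem_nhds z one_pos, (hball z 1 one_pos).2⟩⟩

lemma IsDoubling.measure_ball_two_pow_mul_le {D : ℝ} (hdoub : IsDoubling μ D) (y : X) {t : ℝ}
    (ht : 0 < t) (n : ℕ) : μ (ball y (2 ^ n * t)) ≤ ENNReal.ofReal D ^ n * μ (ball y t) := by
  induction n with
  | zero => simp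
  | succ n ih =>
    calc μ (ball y (2 ^ (n + 1) * t)) = μ (ball y (2 * (2 ^ n * t))) := by ring_nf
      _ ≤ ENNReal.ofReal D * μ (ball y (2 ^ n * t)) := hdoub y _ (by positivity)
      _ ≤ ENNReal.ofReal D * (ENNReal.ofReal D ^ n * μ (ball y t)) := by gcongr
      _ = ENNReal.ofReal D ^ (n + 1) * μ (ball y t) := by ring

lemma IsDoubling.measure_ball_eight_mul_le {D : ℝ} (hdoub : IsDoubling μ D) {x y : X} {t : ℝ}
    (hx : x ∈ ball y t) : μ (ball x (8 * t)) ≤ ENNReal.ofReal D ^ 4 * μ (ball y t) := by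
  have ht := pos_of_mem_ball hx
  have hsub : ball x (8 * t) ⊆ ball y (2 ^ 4 * t) :=
    ball_subset_ball' (by norm_num; linarith [mem_ball.1 hx])
  exact (measure_mono hsub).trans (hdoub.measure_ball_two_pow_mul_le y ht 4)

lemma exists_isOpen_superset_diff_measure_inter_ball_le [OpensMeasurableSpace X] [μ.OuterRegular]
    (hball : BallsPosFinite μ) {E : Set X} (hE : MeasurableSet E) (x : X) {c : ℝ≥0∞}
    (hc : c ≠ 0) :
    ∃ U, IsOpen U ∧ E \ {x} ⊆ U ∧ ∀ s, μ ((U \ E) ∩ ball x s) ≤ c * μ (ball x (4 * s)) := by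
  obtain ⟨w, hw_pos, hw_sum⟩ := ENNReal.exists_pos_sum_of_countable hc ℤ
  set A : ℤ → Set X := fun k => ball x (2 ^ (k + 1)) \ ball x (2 ^ k)
  have hball_pos (k : ℤ) : 0 < μ (ball x (2 ^ (k + 1))) := (hball x _ (by positivity)).1
  have hEA_fin (k : ℤ) : μ (E ∩ A k) ≠ ∞ :=
    (measure_mono (inter_subset_right.trans sdiff_subset)).trans_lt
      (hball x _ (by positivity)).2 |>.ne
  have h_approx (k : ℤ) :
      ∃ V ⊇ E ∩ A k, IsOpen V ∧ μ (V \ (E ∩ A k)) < w k * μ (ball x (2 ^ (k + 1))) := by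
    obtain ⟨V, hEV, hV_open, -, hV_diff⟩ :=
      (hE.inter (measurableSet_ball.diff measurableSet_ball)).exists_isOpen_sdiff_lt (hEA_fin k)
        (ENNReal.mul_pos (ENNReal.coe_ne_zero.2 (hw_pos k).ne') (hball_pos k).ne').ne'
    exact ⟨V, hEV, hV_open, hV_diff⟩
  choose V hEV hV_open hV_diff using h_approx
  refine ⟨⋃ k, V k \ closedBall x (2 ^ (k - 1)),
    isOpen_iUnion fun k => (hV_open k).sdiff isClosed_closedBall, ?_, fun s => ?_⟩
  · rintro z ⟨hzE, hzx⟩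
    obtain ⟨k, hk⟩ := exists_mem_Ico_zpow (dist_pos.2 hzx) one_lt_two
    refine mem_iUnion.2 ⟨k, hEV k ⟨hzE, ?_, ?_⟩, ?_⟩
    · exact mem_ball.2 hk.2
    · exact fun h => (mem_ball.1 h).not_ge hk.1
    · exact fun h => (mem_closedBall.1 h).not_gt <|
        (zpow_lt_zpow_right₀ one_lt_two (by omega)).trans_le hk.1
  -- only the annuli with `2 ^ (k - 1) < s` reach into `ball x s`
  have h_piece (k : ℤ) : μ (((V k \ closedBall x (2 ^ (k - 1))) \ E) ∩ ball x s) ≤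
      w k * μ (ball x (4 * s)) := by
    by_cases hks : (2 : ℝ) ^ (k - 1) < s
    · have h_pow : (2 : ℝ) ^ (k + 1) = 4 * 2 ^ (k - 1) := by
        rw [show k + 1 = 2 + (k - 1) by ring, zpow_add₀ two_ne_zero]; norm_num
      calc μ (((V k \ closedBall x (2 ^ (k - 1))) \ E) ∩ ball x s)
          ≤ μ (V k \ (E ∩ A k)) :=
            measure_mono fun z hz => ⟨hz.1.1.1, fun h => hz.1.2 h.1⟩
        _ ≤ w k * μ (ball x (2 ^ (k + 1))) := (hV_diff k).le
        _ ≤ w k * μ (ball x (4 * s)) := by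
            gcongr
            linarith
    · have hempty : ((V k \ closedBall x (2 ^ (k - 1))) \ E) ∩ ball x s = ∅ :=
        eq_empty_of_forall_notMem fun z hz =>
          hz.1.1.2 (mem_closedBall.2 ((mem_ball.1 hz.2).le.trans (not_lt.1 hks)))
      simp [hempty]
  calc μ ((⋃ k, V k \ closedBall x (2 ^ (k - 1))) \ E ∩ ball x s)
      = μ (⋃ k, ((V k \ closedBall x (2 ^ (k - 1))) \ E) ∩ ball x s) := by
        rw [iUnion_sdiff, iUnion_inter]
    _ ≤ ∑' k, w k * μ (ball x (4 * s)) :=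
        (measure_iUnion_le _).trans (ENNReal.tsum_le_tsum h_piece)
    _ = (∑' k, (w k : ℝ≥0∞)) * μ (ball x (4 * s)) := ENNReal.tsum_mul_right
    _ ≤ c * μ (ball x (4 * s)) := by gcongr

lemma exists_isOpen_superset_diff_measure_inter_ball_le_of_isDoubling [OpensMeasurableSpace X]
    [μ.OuterRegular] {D : ℝ} (hD : 0 < D) (hdoub : IsDoubling μ D) (hball : BallsPosFinite μ)
    {E : Set X} (hE : MeasurableSet E) (x : X) {η : ℝ≥0∞} (hη : η ≠ 0) :
    ∃ U, IsOpen U ∧ E \ {x} ⊆ U ∧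
      ∀ y t, x ∈ ball y t → μ ((U \ E) ∩ ball y t) ≤ η * μ (ball y t) := by
  set K := ENNReal.ofReal D ^ 4
  have hK : K ≠ 0 := pow_ne_zero _ (ENNReal.ofReal_pos.2 hD).ne'
  have hK_top : K ≠ ∞ := by simp [K]
  obtain ⟨U, hU_open, hEU, hU⟩ := exists_isOpen_superset_diff_measure_inter_ball_le hball hE x
    (ENNReal.div_pos hη hK_top).ne'
  refine ⟨U, hU_open, hEU, fun y t hx => ?_⟩
  calc μ ((U \ E) ∩ ball y t) ≤ μ ((U \ E) ∩ ball x (2 * t)) := by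
        gcongr
        exact ball_subset_ball' (by linarith [mem_ball'.1 hx])
    _ ≤ η / K * μ (ball x (8 * t)) := by
        simpa only [← mul_assoc, show (4 : ℝ) * 2 = 8 by norm_num] using hU (2 * t)
    _ ≤ η / K * (K * μ (ball y t)) := by gcongr; exact hdoub.measure_ball_eight_mul_le hx
    _ = η * μ (ball y t) := by rw [← mul_assoc, ENNReal.div_mul_cancel hK hK_top]

lemma exists_pos_measure_ball_diff_lt [OpensMeasurableSpace X] (hball : BallsPosFinite μ)
    {E : Set X} (hE : MeasurableSet E) {x : X} (hx : x ∈ E) {a : ℝ≥0∞} (ha : a ≠ 0) :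
    ∃ s > 0, μ (ball x s \ E) < a := by
  have hempty : ⋂ r > (0 : ℝ), ball x r \ E = ∅ :=
    eq_empty_of_forall_notMem fun z hz => by
      have hzx : z = x := dist_le_zero.1 <| le_of_forall_pos_lt_add fun r hr => by
        simpa using (mem_ball.1 (mem_iInter₂.1 hz r hr).1)
      exact (mem_iInter₂.1 hz 1 one_pos).2 (hzx ▸ hx)
  have h_tendsto := tendsto_measure_biInter_gt (μ := μ) (s := fun r => ball x r \ E) (a := 0)
    (fun r _ => (measurableSet_ball.diff hE).nullMeasurableSet)
    (fun _ _ _ hij => sdiff_subset_sdiff_left (ball_subset_ball hij))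
    ⟨1, one_pos, ne_top_of_le_ne_top (hball x 1 one_pos).2.ne (measure_mono sdiff_subset)⟩
  rw [hempty, measure_empty] at h_tendsto
  exact ((h_tendsto.eventually_lt_const (pos_iff_ne_zero.2 ha)).and
    self_mem_nhdsWithin).exists.imp fun s hs => ⟨hs.2, hs.1⟩

lemma exists_isOpen_superset_symmDiff_measure_inter_ball_le [OpensMeasurableSpace X]
    [μ.OuterRegular] {D : ℝ} (hD : 0 < D) (hdoub : IsDoubling μ D) (hball : BallsPosFinite μ)
    {E : Set X} (hE : MeasurableSet E) (x : X) {η : ℝ≥0∞} (hη : η ≠ 0) :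
    ∃ U, IsOpen U ∧ E \ {x} ⊆ U ∧
      ∀ y t, x ∈ ball y t → μ ((U ∆ E) ∩ ball y t) ≤ η * μ (ball y t) := by
  obtain ⟨U₀, hU₀_open, hEU₀, hU₀⟩ :=
    exists_isOpen_superset_diff_measure_inter_ball_le_of_isDoubling hD hdoub hball hE x
      (ENNReal.half_pos hη).ne'
  by_cases hatom : x ∈ E ∧ μ {x} ≠ 0
  · -- `x` is an atom of `E`: cover it by a ball whose excess is small compared with `μ {x}`
    obtain ⟨s, hs, hs_lt⟩ := exists_pos_measure_ball_diff_lt hball hE hatom.1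
      (ENNReal.mul_pos (ENNReal.half_pos hη).ne' hatom.2).ne'
    have hE_sub : E ⊆ U₀ ∪ ball x s := fun z hz => by
      by_cases hzx : z = x
      · exact Or.inr (hzx ▸ mem_ball_self hs)
      · exact Or.inl (hEU₀ ⟨hz, hzx⟩)
    refine ⟨U₀ ∪ ball x s, hU₀_open.union isOpen_ball, sdiff_subset.trans hE_sub,
      fun y t hx => ?_⟩
    have hsub : ((U₀ ∪ ball x s) ∆ E) ∩ ball y t ⊆ ((U₀ \ E) ∩ ball y t) ∪ (ball x s \ E) := by
      rintro z ⟨(⟨hzU | hzB, hzE⟩ | ⟨hzE, hzU⟩), hzy⟩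
      · exact Or.inl ⟨⟨hzU, hzE⟩, hzy⟩
      · exact Or.inr ⟨hzB, hzE⟩
      · exact absurd (hE_sub hzE) hzU
    calc μ (((U₀ ∪ ball x s) ∆ E) ∩ ball y t)
        ≤ μ ((U₀ \ E) ∩ ball y t) + μ (ball x s \ E) :=
          (measure_mono hsub).trans (measure_union_le _ _)
      _ ≤ η / 2 * μ (ball y t) + η / 2 * μ {x} := add_le_add (hU₀ y t hx) hs_lt.le
      _ ≤ η / 2 * μ (ball y t) + η / 2 * μ (ball y t) := by
          gcongr; exact singleton_subset_iff.2 hx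
      _ = η * μ (ball y t) := by rw [← add_mul, ENNReal.add_halves]
  · refine ⟨U₀, hU₀_open, hEU₀, fun y t hx => ?_⟩
    have hnull : μ (E ∩ {x}) = 0 := by
      rcases not_and_or.1 hatom with hxE | hx0
      · simp [hxE]
      · exact measure_mono_null inter_subset_right (not_not.1 hx0)
    have hsub : (U₀ ∆ E) ∩ ball y t ⊆ ((U₀ \ E) ∩ ball y t) ∪ (E ∩ {x}) := by
      rintro z ⟨(⟨hzU, hzE⟩ | ⟨hzE, hzU⟩), hzy⟩
      · exact Or.inl ⟨⟨hzU, hzE⟩, hzy⟩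
      · by_contra hzx
        exact hzU (hEU₀ ⟨hzE, fun h => hzx (Or.inr ⟨hzE, h⟩)⟩)
    calc μ ((U₀ ∆ E) ∩ ball y t) ≤ μ ((U₀ \ E) ∩ ball y t) + μ (E ∩ {x}) :=
          (measure_mono hsub).trans (measure_union_le _ _)
      _ ≤ η / 2 * μ (ball y t) + 0 := add_le_add (hU₀ y t hx) hnull.le
      _ ≤ η * μ (ball y t) := by rw [add_zero]; gcongr; exact ENNReal.half_le_self

lemma restrMax_le {p r : ℝ} (hr : r ≠ 0) {f : X → ℝ} {x : X} {a : ℝ} (ha : 0 ≤ a)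
    (h : ∀ y t, x ∈ ball y t → (⨍ z in ball y t, |f z| ^ p ∂μ) ^ (1 / p) ≤ a) :
    restrMax μ p r f x ≤ a := by
  rw [restrMax, if_neg hr]
  exact Real.sSup_le (by rintro _ ⟨y, t, hx, -, -, rfl⟩; exact h y t hx) ha

lemma restrMax_indicator_one_sub_indicator_one_le (hball : BallsPosFinite μ) {p r : ℝ}
    (hp : 0 < p) (hr : r ≠ 0) {U E : Set X} (hU : MeasurableSet U) (hE : MeasurableSet E) {x : X}
    {η : ℝ} (hη : 0 ≤ η)
    (h : ∀ y t, x ∈ ball y t → μ ((U ∆ E) ∩ ball y t) ≤ ENNReal.ofReal η * μ (ball y t)) :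
    restrMax μ p r (fun z => U.indicator (fun _ => (1 : ℝ)) z - E.indicator (fun _ => 1) z) x ≤
      η ^ (1 / p) := by
  refine restrMax_le hr (by positivity) fun y t hx => ?_
  simp_rw [abs_indicator_one_sub_indicator_one_rpow hp.ne',
    setAverage_indicator_one (hU.symmDiff hE)]
  exact Real.rpow_le_rpow (by positivity) (measureReal_div_le_of_le_ofReal_mul hη
    (hball y t (pos_of_mem_ball hx)).2.ne (h y t hx)) (by positivity)

end

theorem indicator_open_approximation_general
    {X : Type*} [MetricSpace X] [MeasurableSpace X] [BorelSpace X] [ProperSpace X]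
    (μ : Measure X) (D : ℝ) (hD : 1 < D)
    (hdoub : IsDoubling μ D) (hball : BallsPosFinite μ)
    (p : ℝ) (hp : 1 ≤ p)
    (E : Set X) (hE : MeasurableSet E) (x : X) (ε : ℝ) (hε : 0 < ε) :
    ∃ U : Set X, IsOpen U ∧ E \ {x} ⊆ U ∧
      ∀ r : ℝ, 0 < r →
        restrMax μ p r
          (fun y => U.indicator (fun _ => (1:ℝ)) y - E.indicator (fun _ => (1:ℝ)) y) x < ε := by
  have := hball.isLocallyFiniteMeasure
  have hp0 : 0 < p := by linarith
  have hη : 0 < (ε / 2) ^ p := by positivity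
  obtain ⟨U, hU_open, hEU, hU⟩ := exists_isOpen_superset_symmDiff_measure_inter_ball_le
    (by linarith) hdoub hball hE x (ENNReal.ofReal_pos.2 hη).ne'
  refine ⟨U, hU_open, hEU, fun r hr => ?_⟩
  calc _ ≤ ((ε / 2) ^ p) ^ (1 / p) := restrMax_indicator_one_sub_indicator_one_le hball hp0 hr.ne'
        hU_open.measurableSet hE hη.le hU
    _ = ε / 2 := by rw [one_div, Real.rpow_rpow_inv (by positivity) hp0.ne']
    _ < ε := by linarith

theorem indicator_open_approximation
    {X : Type*} [MetricSpace X] [MeasurableSpace X] [BorelSpace X] [ProperSpace X]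
    [Nontrivial X] (μ : Measure X) (C_QC D : ℝ)
    (hQC : IsQuasiconvex X C_QC) (hD : 1 < D)
    (hdoub : IsDoubling μ D) (hball : BallsPosFinite μ)
    (p : ℝ) (hp : 1 ≤ p) (hdiam : EMetric.diam (univ : Set X) = ⊤)
    (E : Set X) (hE : MeasurableSet E) (x : X) (ε : ℝ) (hε : 0 < ε) :
    ∃ U : Set X, IsOpen U ∧ E \ {x} ⊆ U ∧
      ∀ r : ℝ, 0 < r →
        restrMax μ p r
          (fun y => U.indicator (fun _ => (1:ℝ)) y - E.indicator (fun _ => (1:ℝ)) y) x < ε :=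
  indicator_open_approximation_general μ D hD hdoub hball p hp E hE x ε hε
end

section
/- Let 1 ≤ p < ∞ and 1 ≤ q < p with max{1, p/2} ≤ q. Let ∅ ≠ Ω ⊊ X be open, x ∈ Ω, κ ≥ 1, τ > 0, k ∈ ℕ, and let g: X → [0,1] be lower semicontinuous with M_{q,4κ d(x,Ω^c)} g(x) ≤ τ. For i = 1, …, k set E_i = {z ∈ Ω : M_{q,κ d(x,Ω^c)} g(z) > 4^i τ} and define h = (1/k) Σ_{i=1}^k 1_{E_i} 4^{iq/p}. Then (M_{p,κ d(x,Ω^c)} h(x))^p ≤ 2^p D^5 / k^{p−1}. -/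
open MeasureTheory Metric Set

/-!
Fix a ball `B ∋ x` of radius less than `r = κ d(x, Ωᶜ)`. Every point of `{M_{q,r} g > A τ} ∩ B`
lies in a ball on which `|g|^q` averages more than `(A τ)^q`. When `A^q > D²`, the bound
`M_{q,4r} g(x) ≤ τ` forces these balls to be smaller than `B`, and a disjoint Vitali subfamily
inside `4B` compares their measure with the mass of `|g|^q` on `4B`, at most `τ^q μ(4B)`; this
gives `A^q μ({M_{q,r} g > A τ} ∩ B) ≤ D⁵ μ(B)`.
Since `p ≤ 2q`, the weights `4^{iq/p}` grow at least like `2^i`, so the sum defining `h` is at most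
twice its top term and `h^p ≤ (2/k)^p ∑ᵢ 1_{E_i} 4^{iq}`. Averaging over `B` and applying the
level-set bound to each `E_i` gives `⨍_B h^p ≤ (2/k)^p · k · D⁵`.
-/

open scoped ENNReal

lemma setAverage_nonneg {X : Type*} [MeasurableSpace X] {μ : Measure X} {f : X → ℝ}
    (hf : ∀ x, 0 ≤ f x) (s : Set X) : 0 ≤ ⨍ x in s, f x ∂μ := by
  rw [setAverage_eq, smul_eq_mul]
  exact mul_nonneg (by positivity) (integral_nonneg hf)

lemma lintegral_ofReal_eq_ofReal_setAverage_mul {X : Type*} [MeasurableSpace X]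
    {μ : Measure X} {f : X → ℝ} {s : Set X} (hf : IntegrableOn f s μ) (hf₀ : ∀ x, 0 ≤ f x)
    (hs₀ : μ s ≠ 0) (hs : μ s ≠ ⊤) :
    ∫⁻ x in s, ENNReal.ofReal (f x) ∂μ = ENNReal.ofReal (⨍ x in s, f x ∂μ) * μ s := by
  rw [ofReal_setAverage hf (Filter.Eventually.of_forall hf₀), ENNReal.div_mul_cancel hs₀ hs]

lemma Set.PairwiseDisjoint.countable_of_measure_pos {X ι : Type*} [MeasurableSpace X]
    {μ : Measure X} {u : Set ι} {A : ι → Set X} (hA : ∀ i, MeasurableSet (A i))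
    (hdisj : u.PairwiseDisjoint A) (hpos : ∀ i ∈ u, 0 < μ (A i))
    (hfin : μ (⋃ i ∈ u, A i) ≠ ⊤) : u.Countable := by
  have hcount := Measure.countable_meas_pos_of_disjoint_of_meas_iUnion_ne_top μ
    (As := fun i : u => A i) (fun i => hA i)
    (fun i j hij => hdisj i.2 j.2 (Subtype.coe_ne_coe.2 hij)) (by rwa [iUnion_subtype])
  have huniv : {i : u | 0 < μ (A i)} = univ := eq_univ_of_forall fun i => hpos i i.2
  rw [huniv, countable_univ_iff] at hcount
  exact countable_coe_iff.1 hcount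

section RestrMax

variable {X : Type*} [MetricSpace X] [MeasurableSpace X] {μ : Measure X} {p r c M : ℝ}
  {f : X → ℝ} {x y : X} {t : ℝ}

lemma restrMax_nonneg : 0 ≤ restrMax μ p r f x := by
  unfold restrMax
  split_ifs
  · exact abs_nonneg _
  · refine Real.sSup_nonneg ?_
    rintro _ ⟨y, t, -, -, -, rfl⟩
    exact Real.rpow_nonneg (setAverage_nonneg (fun _ => by positivity) _) _

lemma restrMax_rpow_le (hp : 0 < p) (hr : 0 < r) (hc : 0 ≤ c)
    (h : ∀ y t, x ∈ ball y t → 0 < t → t < r → ⨍ z in ball y t, |f z| ^ p ∂μ ≤ c) :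
    restrMax μ p r f x ^ p ≤ c := by
  have hle : restrMax μ p r f x ≤ c ^ (1 / p) := by
    rw [restrMax, if_neg hr.ne']
    refine Real.sSup_le ?_ (by positivity)
    rintro _ ⟨y, t, hx, ht, htr, rfl⟩
    exact Real.rpow_le_rpow (setAverage_nonneg (fun _ => by positivity) _) (h y t hx ht htr)
      (by positivity)
  calc restrMax μ p r f x ^ p ≤ (c ^ (1 / p)) ^ p := Real.rpow_le_rpow restrMax_nonneg hle hp.le
    _ = c := by rw [one_div, Real.rpow_inv_rpow hc hp.ne']

lemma exists_ball_of_lt_restrMax (hp : 0 < p) (hr : 0 < r) (hc : 0 ≤ c)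
    (h : c < restrMax μ p r f x) :
    ∃ y t, x ∈ ball y t ∧ 0 < t ∧ t < r ∧ c ^ p < ⨍ z in ball y t, |f z| ^ p ∂μ := by
  by_contra! hle
  exact h.not_ge <| (Real.rpow_le_rpow_iff restrMax_nonneg hc hp).1 <|
    restrMax_rpow_le hp hr (by positivity) hle

lemma BallsPosFinite.setAverage_rpow_abs_le (hball : BallsPosFinite μ) (hfM : ∀ y, |f y| ≤ M)
    (hp : 0 ≤ p) (y : X) (ht : 0 < t) : ⨍ z in ball y t, |f z| ^ p ∂μ ≤ M ^ p := by
  have hpos : 0 < μ.real (ball y t) :=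
    ENNReal.toReal_pos (hball y t ht).1.ne' (hball y t ht).2.ne
  have hint : ∫ z in ball y t, |f z| ^ p ∂μ ≤ M ^ p * μ.real (ball y t) :=
    (Real.le_norm_self _).trans <| norm_setIntegral_le_of_norm_le_const (hball y t ht).2
      fun z _ => by
        rw [Real.norm_eq_abs, abs_of_nonneg (by positivity)]
        exact Real.rpow_le_rpow (abs_nonneg _) (hfM z) hp
  calc ⨍ z in ball y t, |f z| ^ p ∂μ = (μ.real (ball y t))⁻¹ * ∫ z in ball y t, |f z| ^ p ∂μ := by
        rw [setAverage_eq, smul_eq_mul]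
    _ ≤ (μ.real (ball y t))⁻¹ * (M ^ p * μ.real (ball y t)) := by gcongr
    _ = M ^ p := by field_simp

lemma le_restrMax (hball : BallsPosFinite μ) (hfM : ∀ y, |f y| ≤ M) (hp : 0 < p)
    (hx : x ∈ ball y t) (ht : 0 < t) (htr : t < r) :
    (⨍ z in ball y t, |f z| ^ p ∂μ) ^ (1 / p) ≤ restrMax μ p r f x := by
  rw [restrMax, if_neg (ht.trans htr).ne']
  refine le_csSup ⟨M, ?_⟩ ⟨y, t, hx, ht, htr, rfl⟩
  rintro _ ⟨y', t', -, ht', -, rfl⟩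
  calc (⨍ z in ball y' t', |f z| ^ p ∂μ) ^ (1 / p) ≤ (M ^ p) ^ (1 / p) :=
        Real.rpow_le_rpow (setAverage_nonneg (fun _ => by positivity) _)
          (hball.setAverage_rpow_abs_le hfM hp.le y' ht') (by positivity)
    _ = M := by rw [one_div, Real.rpow_rpow_inv ((abs_nonneg _).trans (hfM x)) hp.ne']

lemma setAverage_rpow_abs_le_of_restrMax_le (hball : BallsPosFinite μ) (hfM : ∀ y, |f y| ≤ M)
    (hp : 0 < p) (h : restrMax μ p r f x ≤ c) (hx : x ∈ ball y t) (ht : 0 < t) (htr : t < r) :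
    ⨍ z in ball y t, |f z| ^ p ∂μ ≤ c ^ p := by
  have h₀ := setAverage_nonneg (μ := μ) (fun z => by positivity : ∀ z, 0 ≤ |f z| ^ p) (ball y t)
  calc ⨍ z in ball y t, |f z| ^ p ∂μ = ((⨍ z in ball y t, |f z| ^ p ∂μ) ^ (1 / p)) ^ p := by
        rw [one_div, Real.rpow_inv_rpow h₀ hp.ne']
    _ ≤ c ^ p := Real.rpow_le_rpow (by positivity)
        ((le_restrMax hball hfM hp hx ht htr).trans h) hp.le

lemma lowerSemicontinuous_restrMax (hball : BallsPosFinite μ) (hfM : ∀ y, |f y| ≤ M)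
    (hp : 0 < p) (hr : 0 < r) : LowerSemicontinuous (restrMax μ p r f) := by
  intro x c hc
  rcases lt_or_ge c 0 with hc₀ | hc₀
  · exact Filter.Eventually.of_forall fun _ => hc₀.trans_le restrMax_nonneg
  obtain ⟨y, t, hx, ht, htr, hlt⟩ := exists_ball_of_lt_restrMax hp hr hc₀ hc
  filter_upwards [isOpen_ball.mem_nhds hx] with z hz
  calc c = (c ^ p) ^ (1 / p) := by rw [one_div, Real.rpow_rpow_inv hc₀ hp.ne']
    _ < (⨍ w in ball y t, |f w| ^ p ∂μ) ^ (1 / p) :=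
        Real.rpow_lt_rpow (by positivity) hlt (by positivity)
    _ ≤ restrMax μ p r f z := le_restrMax hball hfM hp hz ht htr

lemma BallsPosFinite.integrableOn_rpow_abs (hball : BallsPosFinite μ) (hf : Measurable f)
    (hfM : ∀ y, |f y| ≤ M) (hp : 0 ≤ p) (y : X) (ht : 0 < t) :
    IntegrableOn (fun z => |f z| ^ p) (ball y t) μ :=
  Measure.integrableOn_of_bounded (M := M ^ p) (hball y t ht).2.ne
    (hf.abs.pow_const p).aestronglyMeasurable <| Filter.Eventually.of_forall fun z => by
      rw [Real.norm_eq_abs, abs_of_nonneg (by positivity)]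
      exact Real.rpow_le_rpow (abs_nonneg _) (hfM z) hp

end RestrMax

section Doubling

variable {X : Type*} [MetricSpace X] [MeasurableSpace X] {μ : Measure X} {D : ℝ}

lemma IsDoubling.measure_ball_le_pow (hdoub : IsDoubling μ D) (y : X) {s : ℝ} (hs : 0 < s)
    (n : ℕ) {t : ℝ} (ht : t ≤ 2 ^ n * s) :
    μ (ball y t) ≤ ENNReal.ofReal D ^ n * μ (ball y s) := by
  induction n generalizing t with
  | zero => simpa using measure_mono (ball_subset_ball (by simpa using ht))
  | succ n ih =>
    calc μ (ball y t) ≤ μ (ball y (2 * (2 ^ n * s))) :=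
          measure_mono (ball_subset_ball (by rw [pow_succ] at ht; linarith))
      _ ≤ ENNReal.ofReal D * μ (ball y (2 ^ n * s)) := hdoub y _ (by positivity)
      _ ≤ ENNReal.ofReal D * (ENNReal.ofReal D ^ n * μ (ball y s)) := by gcongr; exact ih le_rfl
      _ = ENNReal.ofReal D ^ (n + 1) * μ (ball y s) := by rw [pow_succ', mul_assoc]

variable [OpensMeasurableSpace X]

/-- Vitali covering: `S` is covered by the balls `closedBall c (4 s) ⊆ ball c (2³ s)` of a
disjoint subfamily, whence the factor `D³`. -/
lemma IsDoubling.mul_measure_le_lintegral_of_ball_cover (hdoub : IsDoubling μ D)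
    (hball : BallsPosFinite μ) {S U : Set X} (hU : μ U ≠ ⊤) {c : X → X} {s : X → ℝ} {R : ℝ}
    (hmem : ∀ z ∈ S, z ∈ ball (c z) (s z)) (hs : ∀ z ∈ S, 0 < s z) (hR : ∀ z ∈ S, s z ≤ R)
    (hsub : ∀ z ∈ S, closedBall (c z) (s z) ⊆ U) {Λ : ℝ≥0∞} {G : X → ℝ≥0∞}
    (hΛ : ∀ z ∈ S, Λ * μ (ball (c z) (s z)) ≤ ∫⁻ w in ball (c z) (s z), G w ∂μ) :
    Λ * μ S ≤ ENNReal.ofReal D ^ 3 * ∫⁻ w in U, G w ∂μ := by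
  obtain ⟨u, huS, hdisj, hcov⟩ :=
    Vitali.exists_disjoint_subfamily_covering_enlargement_closedBall S c s R hR 4 (by norm_num)
  have hcount : u.Countable :=
    hdisj.countable_of_measure_pos (fun _ => measurableSet_closedBall)
      (fun b hb => (hball _ _ (hs b (huS hb))).1.trans_le (measure_mono ball_subset_closedBall))
      (ne_top_of_le_ne_top hU (measure_mono (iUnion₂_subset fun b hb => hsub b (huS hb))))
  have : Countable u := hcount.to_subtype
  have hdisj' : Pairwise (Function.onFun Disjoint fun b : u => ball (c b) (s b)) :=
    fun b b' hbb' => (hdisj b.2 b'.2 (Subtype.coe_ne_coe.2 hbb')).mono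
      ball_subset_closedBall ball_subset_closedBall
  have hcover : S ⊆ ⋃ b ∈ u, closedBall (c b) (4 * s b) := fun z hz =>
    let ⟨b, hb, hzb⟩ := hcov z hz
    mem_biUnion hb (hzb (ball_subset_closedBall (hmem z hz)))
  have hbig (b : u) :
      μ (closedBall (c b) (4 * s b)) ≤ ENNReal.ofReal D ^ 3 * μ (ball (c b) (s b)) :=
    (measure_mono (closedBall_subset_ball (ε₂ := 2 ^ 3 * s b) (by linarith [hs b (huS b.2)]))).trans
      (hdoub.measure_ball_le_pow _ (hs b (huS b.2)) 3 le_rfl)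
  calc Λ * μ S ≤ Λ * ∑' b : u, μ (closedBall (c b) (4 * s b)) :=
        mul_le_mul_right ((measure_mono hcover).trans (measure_biUnion_le μ hcount _)) _
    _ ≤ Λ * ∑' b : u, ENNReal.ofReal D ^ 3 * μ (ball (c b) (s b)) := by
        gcongr with b; exact hbig b
    _ = ENNReal.ofReal D ^ 3 * ∑' b : u, Λ * μ (ball (c b) (s b)) := by
        rw [ENNReal.tsum_mul_left, ENNReal.tsum_mul_left, mul_left_comm]
    _ ≤ ENNReal.ofReal D ^ 3 * ∑' b : u, ∫⁻ w in ball (c b) (s b), G w ∂μ := by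
        gcongr with b; exact hΛ b (huS b.2)
    _ = ENNReal.ofReal D ^ 3 * ∫⁻ w in ⋃ b : u, ball (c b) (s b), G w ∂μ := by
        rw [lintegral_iUnion (fun _ => measurableSet_ball) hdisj']
    _ ≤ ENNReal.ofReal D ^ 3 * ∫⁻ w in U, G w ∂μ :=
        mul_le_mul_right (lintegral_mono_set
          (iUnion_subset fun b : u => ball_subset_closedBall.trans (hsub b (huS b.2)))) _

end Doubling

section WeakType

variable {X : Type*} [MetricSpace X] [MeasurableSpace X] {μ : Measure X} {D : ℝ}
  {g : X → ℝ} {M q r τ c : ℝ} {x y : X} {t : ℝ}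

lemma lintegral_ball_le_of_restrMax_le (hball : BallsPosFinite μ) (hg : Measurable g)
    (hgM : ∀ y, |g y| ≤ M) (hq : 0 < q) (h : restrMax μ q r g x ≤ c) (hx : x ∈ ball y t)
    (ht : 0 < t) (htr : t < r) :
    ∫⁻ z in ball y t, ENNReal.ofReal (|g z| ^ q) ∂μ ≤ ENNReal.ofReal (c ^ q) * μ (ball y t) := by
  rw [lintegral_ofReal_eq_ofReal_setAverage_mul (hball.integrableOn_rpow_abs hg hgM hq.le y ht)
    (fun _ => by positivity) (hball y t ht).1.ne' (hball y t ht).2.ne]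
  gcongr
  exact setAverage_rpow_abs_le_of_restrMax_le hball hgM hq h hx ht htr

lemma exists_ball_le_lintegral_of_lt_restrMax (hball : BallsPosFinite μ) (hg : Measurable g)
    (hgM : ∀ y, |g y| ≤ M) (hq : 0 < q) (hr : 0 < r) (hc : 0 ≤ c) (h : c < restrMax μ q r g x) :
    ∃ y t, x ∈ ball y t ∧ 0 < t ∧ t < r ∧
      ENNReal.ofReal (c ^ q) * μ (ball y t) ≤ ∫⁻ z in ball y t, ENNReal.ofReal (|g z| ^ q) ∂μ := by
  obtain ⟨y, t, hx, ht, htr, hlt⟩ := exists_ball_of_lt_restrMax hq hr hc h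
  refine ⟨y, t, hx, ht, htr, ?_⟩
  rw [lintegral_ofReal_eq_ofReal_setAverage_mul (hball.integrableOn_rpow_abs hg hgM hq.le y ht)
    (fun _ => by positivity) (hball y t ht).1.ne' (hball y t ht).2.ne]
  gcongr

/-- Otherwise `ball w (4 s)` contains `x`, so `M_{q,4r} g(x) ≤ τ` and doubling bound the mass of
`|g|^q` on `ball w s` by `D² τ^q μ(ball w s)`. -/
lemma radius_lt_of_doubling_mul_lt_lintegral (hdoub : IsDoubling μ D) (hball : BallsPosFinite μ)
    (hg : Measurable g) (hgM : ∀ y, |g y| ≤ M) (hq : 0 < q) (hMg : restrMax μ q (4 * r) g x ≤ τ)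
    (hx : x ∈ ball y t) {z w : X} {s : ℝ} (hz : z ∈ ball y t) (hzw : z ∈ ball w s) (hs : 0 < s)
    (hsr : s < r) (hlt : ENNReal.ofReal D ^ 2 * ENNReal.ofReal (τ ^ q) * μ (ball w s) <
      ∫⁻ v in ball w s, ENNReal.ofReal (|g v| ^ q) ∂μ) :
    s < t := by
  by_contra! hts
  have hx₄ : x ∈ ball w (4 * s) := by
    rw [mem_ball] at *
    linarith [dist_triangle4 x y z w, dist_comm z y]
  refine hlt.not_ge ?_
  calc ∫⁻ v in ball w s, ENNReal.ofReal (|g v| ^ q) ∂μ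
      ≤ ∫⁻ v in ball w (4 * s), ENNReal.ofReal (|g v| ^ q) ∂μ :=
        lintegral_mono_set (ball_subset_ball (by linarith))
    _ ≤ ENNReal.ofReal (τ ^ q) * μ (ball w (4 * s)) :=
        lintegral_ball_le_of_restrMax_le hball hg hgM hq hMg hx₄ (by positivity) (by linarith)
    _ ≤ ENNReal.ofReal (τ ^ q) * (ENNReal.ofReal D ^ 2 * μ (ball w s)) := by
        gcongr; exact hdoub.measure_ball_le_pow w hs 2 (by norm_num)
    _ = ENNReal.ofReal D ^ 2 * ENNReal.ofReal (τ ^ q) * μ (ball w s) := by ring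

lemma exists_ball_lt_radius_le_lintegral (hdoub : IsDoubling μ D) (hD : 0 ≤ D)
    (hball : BallsPosFinite μ) (hg : Measurable g) (hgM : ∀ y, |g y| ≤ M) (hq : 0 < q)
    (hτ : 0 < τ) (hr : 0 < r) (hMg : restrMax μ q (4 * r) g x ≤ τ) {A : ℝ} (hA : 0 < A)
    (hAD : D ^ 2 < A ^ q) (hx : x ∈ ball y t) {z : X} (hz : z ∈ ball y t)
    (hzA : A * τ < restrMax μ q r g z) :
    ∃ w s, z ∈ ball w s ∧ 0 < s ∧ s < t ∧
      ENNReal.ofReal ((A * τ) ^ q) * μ (ball w s) ≤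
        ∫⁻ v in ball w s, ENNReal.ofReal (|g v| ^ q) ∂μ := by
  obtain ⟨w, s, hzw, hs, hsr, hle⟩ :=
    exists_ball_le_lintegral_of_lt_restrMax hball hg hgM hq hr (by positivity) hzA
  refine ⟨w, s, hzw, hs, ?_, hle⟩
  refine radius_lt_of_doubling_mul_lt_lintegral hdoub hball hg hgM hq hMg hx hz hzw hs hsr
    (lt_of_lt_of_le ?_ hle)
  rw [← ENNReal.ofReal_pow hD, ← ENNReal.ofReal_mul (by positivity), Real.mul_rpow hA.le hτ.le]
  refine ENNReal.mul_lt_mul_left (hball w s hs).1.ne' (hball w s hs).2.ne ?_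
  exact ENNReal.ofReal_lt_ofReal_iff'.2 ⟨mul_lt_mul_of_pos_right hAD (by positivity), by positivity⟩

theorem measure_lt_restrMax_inter_ball_le [OpensMeasurableSpace X] (hdoub : IsDoubling μ D)
    (hD : 1 ≤ D) (hball : BallsPosFinite μ) (hg : Measurable g) (hgM : ∀ y, |g y| ≤ M)
    (hq : 0 < q) (hτ : 0 < τ) (hr : 0 < r) (hMg : restrMax μ q (4 * r) g x ≤ τ) {A : ℝ}
    (hA : 0 < A) (hx : x ∈ ball y t) (ht : 0 < t) (htr : t < r) :
    ENNReal.ofReal (A ^ q) * μ ({z | A * τ < restrMax μ q r g z} ∩ ball y t) ≤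
      ENNReal.ofReal D ^ 5 * μ (ball y t) := by
  set S := {z | A * τ < restrMax μ q r g z} ∩ ball y t
  have hD₀ : 0 ≤ D := zero_le_one.trans hD
  rcases le_or_gt (A ^ q) (D ^ 2) with hAD | hAD
  · refine mul_le_mul' ?_ (measure_mono inter_subset_right)
    calc ENNReal.ofReal (A ^ q) ≤ ENNReal.ofReal D ^ 2 := by
          rw [← ENNReal.ofReal_pow hD₀]; exact ENNReal.ofReal_le_ofReal hAD
      _ ≤ ENNReal.ofReal D ^ 5 := pow_le_pow_right₀ (ENNReal.one_le_ofReal.2 hD) (by norm_num)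
  choose! w s hmem hs hst hle using fun z (hz : z ∈ S) =>
    exists_ball_lt_radius_le_lintegral hdoub hD₀ hball hg hgM hq hτ hr hMg hA hAD hx hz.2 hz.1
  have hsub : ∀ z ∈ S, closedBall (w z) (s z) ⊆ ball y (4 * t) := fun z hz v hv => by
    rw [mem_closedBall] at hv
    rw [mem_ball]
    linarith [dist_triangle4 v (w z) z y, dist_comm z (w z), mem_ball.1 (hmem z hz),
      mem_ball.1 hz.2, hst z hz]
  have hcover := hdoub.mul_measure_le_lintegral_of_ball_cover hball
    (hball y (4 * t) (by positivity)).2.ne hmem hs (fun z hz => (hst z hz).le) hsub hle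
  have hbig := lintegral_ball_le_of_restrMax_le hball hg hgM hq hMg
    (ball_subset_ball (by linarith) hx : x ∈ ball y (4 * t)) (by positivity) (by linarith)
  refine (ENNReal.mul_le_mul_iff_right (ENNReal.ofReal_pos.2 (by positivity : 0 < τ ^ q)).ne'
    ENNReal.ofReal_ne_top).1 ?_
  calc ENNReal.ofReal (τ ^ q) * (ENNReal.ofReal (A ^ q) * μ S)
      = ENNReal.ofReal ((A * τ) ^ q) * μ S := by
        rw [Real.mul_rpow hA.le hτ.le, ENNReal.ofReal_mul (by positivity)]; ring
    _ ≤ ENNReal.ofReal D ^ 3 * (ENNReal.ofReal (τ ^ q) * μ (ball y (4 * t))) :=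
        hcover.trans (mul_le_mul_right hbig _)
    _ ≤ ENNReal.ofReal D ^ 3 *
          (ENNReal.ofReal (τ ^ q) * (ENNReal.ofReal D ^ 2 * μ (ball y t))) := by
        gcongr; exact hdoub.measure_ball_le_pow y ht 2 (by norm_num)
    _ = ENNReal.ofReal (τ ^ q) * (ENNReal.ofReal D ^ 5 * μ (ball y t)) := by ring

theorem measureReal_lt_restrMax_inter_ball_le [OpensMeasurableSpace X] (hdoub : IsDoubling μ D)
    (hD : 1 ≤ D) (hball : BallsPosFinite μ) (hg : Measurable g) (hgM : ∀ y, |g y| ≤ M)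
    (hq : 0 < q) (hτ : 0 < τ) (hr : 0 < r) (hMg : restrMax μ q (4 * r) g x ≤ τ) {A : ℝ}
    (hA : 0 < A) (hx : x ∈ ball y t) (ht : 0 < t) (htr : t < r) :
    A ^ q * μ.real ({z | A * τ < restrMax μ q r g z} ∩ ball y t) ≤ D ^ 5 * μ.real (ball y t) := by
  have h := ENNReal.toReal_mono (ENNReal.mul_ne_top (by simp) (hball y t ht).2.ne) <|
    measure_lt_restrMax_inter_ball_le hdoub hD hball hg hgM hq hτ hr hMg hA hx ht htr
  rwa [ENNReal.toReal_mul, ENNReal.toReal_mul, ENNReal.toReal_pow,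
    ENNReal.toReal_ofReal (by positivity), ENNReal.toReal_ofReal (zero_le_one.trans hD)] at h

end WeakType

lemma sum_range_pow_le_two_mul_pow {b : ℝ} (hb : 2 ≤ b) (n : ℕ) :
    ∑ i ∈ Finset.range (n + 1), b ^ i ≤ 2 * b ^ n := by
  induction n with
  | zero => norm_num
  | succ n ih =>
    rw [Finset.sum_range_succ, pow_succ]
    nlinarith [pow_nonneg (zero_le_two.trans hb) n]

/-- A sum of distinct powers of `b ≥ 2` is at most twice its largest term. -/
lemma rpow_sum_pow_le_two_rpow_mul_sum {b p : ℝ} (hb : 2 ≤ b) (hp : 0 < p) (S : Finset ℕ) :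
    (∑ i ∈ S, b ^ i) ^ p ≤ 2 ^ p * ∑ i ∈ S, (b ^ i) ^ p := by
  rcases S.eq_empty_or_nonempty with rfl | hS
  · simp [Real.zero_rpow hp.ne']
  have hb₀ : 0 ≤ b := zero_le_two.trans hb
  have hsum : ∑ i ∈ S, b ^ i ≤ 2 * b ^ S.max' hS :=
    (Finset.sum_le_sum_of_subset_of_nonneg
      (fun i hi => Finset.mem_range_succ_iff.2 (S.le_max' i hi)) fun i _ _ => by positivity).trans
      (sum_range_pow_le_two_mul_pow hb _)
  calc (∑ i ∈ S, b ^ i) ^ p ≤ (2 * b ^ S.max' hS) ^ p :=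
        Real.rpow_le_rpow (by positivity) hsum hp.le
    _ = 2 ^ p * (b ^ S.max' hS) ^ p := Real.mul_rpow zero_le_two (by positivity)
    _ ≤ 2 ^ p * ∑ i ∈ S, (b ^ i) ^ p := by
        gcongr
        exact Finset.single_le_sum (f := fun i => (b ^ i) ^ p) (fun i _ => by positivity)
          (S.max'_mem hS)

lemma rpow_indicator_sum_le {α : Type*} (E : ℕ → Set α) (z : α) {p q : ℝ} (hp : 0 < p)
    (hpq : p ≤ 2 * q) (k : ℕ) :
    |(1 / (k : ℝ)) * ∑ i ∈ Finset.Icc 1 k,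
        (E i).indicator (fun _ => (1 : ℝ)) z * (4 : ℝ) ^ ((i : ℝ) * q / p)| ^ p ≤
      (2 / k) ^ p * ∑ i ∈ Finset.Icc 1 k, (E i).indicator (fun _ => ((4 : ℝ) ^ i) ^ q) z := by
  classical
  set b : ℝ := 4 ^ (q / p)
  have hb : 2 ≤ b := by
    calc (2 : ℝ) = 4 ^ (1 / 2 : ℝ) := by
          rw [show (4 : ℝ) = 2 ^ (2 : ℝ) by norm_num, ← Real.rpow_mul zero_le_two]; norm_num
      _ ≤ b := Real.rpow_le_rpow_of_exponent_le (by norm_num) (by rw [le_div_iff₀ hp]; linarith)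
  have hpow : ∀ i : ℕ, (4 : ℝ) ^ ((i : ℝ) * q / p) = b ^ i := fun i => by
    rw [← Real.rpow_natCast, ← Real.rpow_mul (by norm_num)]; ring_nf
  have hpow' : ∀ i : ℕ, (b ^ i) ^ p = ((4 : ℝ) ^ i) ^ q := fun i => by
    rw [Real.rpow_pow_comm (by norm_num), ← Real.rpow_mul (by positivity),
      div_mul_cancel₀ _ hp.ne']
  set S := (Finset.Icc 1 k).filter (z ∈ E ·)
  have hlhs : ∑ i ∈ Finset.Icc 1 k, (E i).indicator (fun _ => (1 : ℝ)) z *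
      (4 : ℝ) ^ ((i : ℝ) * q / p) = ∑ i ∈ S, b ^ i := by
    simp [S, Finset.sum_filter, Set.indicator_apply, hpow]
  have hrhs : ∑ i ∈ Finset.Icc 1 k, (E i).indicator (fun _ => ((4 : ℝ) ^ i) ^ q) z =
      ∑ i ∈ S, (b ^ i) ^ p := by
    simp [S, Finset.sum_filter, Set.indicator_apply, ← hpow']
  rw [hlhs, hrhs, abs_of_nonneg (by positivity), Real.mul_rpow (by positivity) (by positivity),
    div_eq_mul_one_div 2, Real.mul_rpow zero_le_two (by positivity), mul_comm ((2 : ℝ) ^ p),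
    mul_assoc]
  gcongr
  exact rpow_sum_pow_le_two_rpow_mul_sum hb hp S

section TestFunction

variable {X : Type*} [MeasurableSpace X] {μ : Measure X}

lemma setAverage_sum_indicator_le {ι : Type*} (I : Finset ι) {E : ι → Set X}
    (hE : ∀ i, MeasurableSet (E i)) (w : ι → ℝ) {B : Set X} (hB₀ : μ B ≠ 0) (hB : μ B ≠ ⊤)
    {C : ℝ} (h : ∀ i ∈ I, w i * μ.real (E i ∩ B) ≤ C * μ.real B) :
    ⨍ z in B, ∑ i ∈ I, (E i).indicator (fun _ => w i) z ∂μ ≤ I.card * C := by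
  have hpos : 0 < μ.real B := ENNReal.toReal_pos hB₀ hB
  have hint : ∀ i ∈ I, IntegrableOn ((E i).indicator fun _ => w i) B μ :=
    fun i _ => (integrableOn_const hB).indicator (hE i)
  rw [setAverage_eq, smul_eq_mul, integral_finsetSum I hint, inv_mul_le_iff₀ hpos]
  calc ∑ i ∈ I, ∫ z in B, (E i).indicator (fun _ => w i) z ∂μ
      = ∑ i ∈ I, w i * μ.real (E i ∩ B) := by
        refine Finset.sum_congr rfl fun i _ => ?_
        rw [integral_indicator_const _ (hE i), measureReal_restrict_apply (hE i), smul_eq_mul,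
          mul_comm]
    _ ≤ ∑ _i ∈ I, C * μ.real B := Finset.sum_le_sum h
    _ = μ.real B * (I.card * C) := by rw [Finset.sum_const, nsmul_eq_mul]; ring

lemma two_div_rpow_mul_le {p C : ℝ} (hC : 0 ≤ C) (k : ℕ) :
    (2 / k : ℝ) ^ p * (k * C) ≤ 2 ^ p * C / (k : ℝ) ^ (p - 1) := by
  rcases k.eq_zero_or_pos with rfl | hk
  -- for `k = 0` the right side is a junk value of division by `0 ^ (p - 1)`, but nonnegative
  · simp only [CharP.cast_eq_zero, zero_mul, mul_zero]; positivity
  have hk' : (0 : ℝ) < k := Nat.cast_pos.2 hk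
  rw [Real.div_rpow zero_le_two hk'.le, Real.rpow_sub hk', Real.rpow_one]
  exact le_of_eq (by field_simp)

theorem setAverage_rpow_indicator_sum_le {E : ℕ → Set X} (hE : ∀ i, MeasurableSet (E i))
    {B : Set X} (hB₀ : μ B ≠ 0) (hB : μ B ≠ ⊤) {p q C : ℝ} (hp : 0 < p) (hpq : p ≤ 2 * q)
    (hC : 0 ≤ C) {k : ℕ}
    (hEB : ∀ i ∈ Finset.Icc 1 k, ((4 : ℝ) ^ i) ^ q * μ.real (E i ∩ B) ≤ C * μ.real B) :
    ⨍ z in B, |(1 / (k : ℝ)) * ∑ i ∈ Finset.Icc 1 k,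
        (E i).indicator (fun _ => (1 : ℝ)) z * (4 : ℝ) ^ ((i : ℝ) * q / p)| ^ p ∂μ ≤
      2 ^ p * C / (k : ℝ) ^ (p - 1) := by
  have hint : IntegrableOn
      (fun z => ∑ i ∈ Finset.Icc 1 k, (E i).indicator (fun _ => ((4 : ℝ) ^ i) ^ q) z) B μ :=
    integrable_finsetSum _ fun i _ => (integrableOn_const hB).indicator (hE i)
  calc _ ≤ ⨍ z in B, (2 / k : ℝ) ^ p *
          ∑ i ∈ Finset.Icc 1 k, (E i).indicator (fun _ => ((4 : ℝ) ^ i) ^ q) z ∂μ := by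
        rw [setAverage_eq, setAverage_eq]
        refine smul_le_smul_of_nonneg_left (integral_mono_of_nonneg
          (Filter.Eventually.of_forall fun _ => by positivity) (hint.const_mul _)
          (Filter.Eventually.of_forall fun z => rpow_indicator_sum_le E z hp hpq k)) (by positivity)
    _ = (2 / k : ℝ) ^ p *
          ⨍ z in B, ∑ i ∈ Finset.Icc 1 k, (E i).indicator (fun _ => ((4 : ℝ) ^ i) ^ q) z ∂μ := by
        rw [setAverage_eq, setAverage_eq, integral_const_mul, smul_eq_mul, smul_eq_mul,
          mul_left_comm]
    _ ≤ (2 / k : ℝ) ^ p * (k * C) := by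
        gcongr
        simpa using setAverage_sum_indicator_le _ hE _ hB₀ hB hEB
    _ ≤ 2 ^ p * C / (k : ℝ) ^ (p - 1) := two_div_rpow_mul_le hC k

end TestFunction

theorem maximal_estimate_for_test_function_general
    {X : Type*} [MetricSpace X] [MeasurableSpace X] [BorelSpace X] (μ : Measure X) (D : ℝ)
    (hD : 1 < D)
    (hdoub : IsDoubling μ D) (hball : BallsPosFinite μ)
    (p q : ℝ) (hq1 : 1 ≤ q) (hqp : q < p) (hmax : max 1 (p/2) ≤ q)
    (Ω : Set X) (hΩo : IsOpen Ω) (hΩprop : Ω ≠ univ)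
    (x : X) (hx : x ∈ Ω) (κ : ℝ) (hκ : 1 ≤ κ) (τ : ℝ) (hτ : 0 < τ) (k : ℕ)
    (g : X → ℝ) (hlsc : LowerSemicontinuous g) (hrange : ∀ y, g y ∈ Icc (0:ℝ) 1)
    (hMg : restrMax μ q (4 * κ * infDist x Ωᶜ) g x ≤ τ) :
    (restrMax μ p (κ * infDist x Ωᶜ)
        (fun z => (1/(k:ℝ)) * ∑ i ∈ Finset.Icc 1 k,
          (({z' : X | z' ∈ Ω ∧ (4:ℝ) ^ i * τ < restrMax μ q (κ * infDist x Ωᶜ) g z'}).indicator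
              (fun _ => (1:ℝ)) z) * (4:ℝ) ^ ((i:ℝ) * q / p)) x) ^ p
      ≤ 2 ^ p * D ^ 5 / (k:ℝ) ^ (p - 1) := by
  have hd : 0 < infDist x Ωᶜ := by
    rw [← hΩo.isClosed_compl.notMem_iff_infDist_pos (nonempty_compl.2 hΩprop)]
    simpa using hx
  have hr : 0 < κ * infDist x Ωᶜ := mul_pos (by linarith) hd
  have hq : 0 < q := by linarith
  have hp : 0 < p := by linarith
  have hgM : ∀ y, |g y| ≤ 1 := fun y => abs_le.2 ⟨by linarith [(hrange y).1], (hrange y).2⟩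
  have hE (i : ℕ) : MeasurableSet
      {z | z ∈ Ω ∧ (4 : ℝ) ^ i * τ < restrMax μ q (κ * infDist x Ωᶜ) g z} :=
    hΩo.measurableSet.inter <| measurableSet_lt measurable_const
      (lowerSemicontinuous_restrMax hball hgM hq hr).measurable
  refine restrMax_rpow_le hp hr (by positivity) fun y t hxB ht htr => ?_
  have hB := hball y t ht
  refine setAverage_rpow_indicator_sum_le hE hB.1.ne' hB.2.ne hp
    (by linarith [le_max_right 1 (p / 2)]) (by positivity) fun i _ => ?_
  refine le_trans ?_ <| measureReal_lt_restrMax_inter_ball_le hdoub hD.le hball hlsc.measurable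
    hgM hq hτ hr (by rwa [← mul_assoc]) (A := 4 ^ i) (by positivity) hxB ht htr
  gcongr
  · exact ((measure_mono inter_subset_right).trans_lt hB.2).ne
  · exact fun hz => hz.2

theorem maximal_estimate_for_test_function
    {X : Type*} [MetricSpace X] [MeasurableSpace X] [BorelSpace X] [ProperSpace X]
    [Nontrivial X] (μ : Measure X) (C_QC D : ℝ)
    (hQC : IsQuasiconvex X C_QC) (hD : 1 < D)
    (hdoub : IsDoubling μ D) (hball : BallsPosFinite μ)
    (p q : ℝ) (hq1 : 1 ≤ q) (hqp : q < p) (hmax : max 1 (p/2) ≤ q)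
    (Ω : Set X) (hΩo : IsOpen Ω) (hΩne : Ω.Nonempty) (hΩprop : Ω ≠ univ)
    (x : X) (hx : x ∈ Ω) (κ : ℝ) (hκ : 1 ≤ κ) (τ : ℝ) (hτ : 0 < τ) (k : ℕ)
    (g : X → ℝ) (hlsc : LowerSemicontinuous g) (hrange : ∀ y, g y ∈ Icc (0:ℝ) 1)
    (hMg : restrMax μ q (4 * κ * infDist x Ωᶜ) g x ≤ τ) :
    (restrMax μ p (κ * infDist x Ωᶜ)
        (fun z => (1/(k:ℝ)) * ∑ i ∈ Finset.Icc 1 k,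
          (({z' : X | z' ∈ Ω ∧ (4:ℝ) ^ i * τ < restrMax μ q (κ * infDist x Ωᶜ) g z'}).indicator
              (fun _ => (1:ℝ)) z) * (4:ℝ) ^ ((i:ℝ) * q / p)) x) ^ p
      ≤ 2 ^ p * D ^ 5 / (k:ℝ) ^ (p - 1) :=
  maximal_estimate_for_test_function_general μ D hD hdoub hball p q hq1 hqp hmax Ω hΩo hΩprop x hx κ
    hκ τ hτ k g hlsc hrange hMg
end
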